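/- Let G be a trivially perfect graph with cotree T in which every 1-labeled node has at most one non-leaf child, and let 𝒞 be an optimal clustering of G such that every clade of T has single-growth in 𝒞, chosen among all such clusterings with |𝒞| maximum. Then for every clade X of T, either X grows in no part of 𝒞, or X grows in exactly one part C_i ∈ 𝒞 and |X ∩ C_i| = max_{C_j ∈ 𝒞} |X ∩ C_j|. -/

import Mathlib

open Finset

universe u

namespace ClusterEditing




variable {V : Type u}

/-- Cost of a partition `P` of the finset `X` with respect to `G`: the number of
edges of `G` within `X` whose endpoints lie in different parts, plus the number of
non-adjacent pairs of distinct vertices lying in the same part. -/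
noncomputable def costOn [DecidableEq V] (G : SimpleGraph V) (X : Finset V) (P : Finpartition X) : ℕ :=
  {e : Sym2 V | e ∈ G.edgeSet ∧ (∀ v ∈ e, v ∈ X) ∧ ¬ ∃ C ∈ P.parts, ∀ v ∈ e, v ∈ C}.ncard +
  {e : Sym2 V | e ∈ Gᶜ.edgeSet ∧ ∃ C ∈ P.parts, ∀ v ∈ e, v ∈ C}.ncard

/-- Cost of a clustering (a partition of the whole vertex set). -/
noncomputable def cost [Fintype V] [DecidableEq V] (G : SimpleGraph V)
    (P : Finpartition (univ : Finset V)) : ℕ :=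
  costOn G univ P

/-- An optimal clustering: one of minimum cost. -/
def IsOptimal [Fintype V] [DecidableEq V] (G : SimpleGraph V)
    (P : Finpartition (univ : Finset V)) : Prop :=
  ∀ Q : Finpartition (univ : Finset V), cost G P ≤ cost G Q

/-- Number of (ordered) adjacent pairs `(u, v)` with `u ∈ S`, `v ∈ T`. -/
noncomputable def eBetween (G : SimpleGraph V) (S T : Finset V) : ℕ :=
  {p : V × V | p.1 ∈ S ∧ p.2 ∈ T ∧ G.Adj p.1 p.2}.ncard

/-- Number of non-adjacent pairs between `S` and `T`. -/
noncomputable def nonEBetween (G : SimpleGraph V) (S T : Finset V) : ℕ :=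
  S.card * T.card - eBetween G S T





variable {V : Type u}

/-- A cotree: leaves are vertices; internal nodes carry a label (`true` = 1-node,
`false` = 0-node) and a list of children. -/
inductive Cotree (V : Type u) : Type u
  | leaf : V → Cotree V
  | node : Bool → List (Cotree V) → Cotree V

namespace Cotree

mutual
  /-- The list of leaves of a cotree. -/
  def leaves : Cotree V → List V
    | .leaf v => [v]
    | .node _ ts => leavesAux ts
  def leavesAux : List (Cotree V) → List V
    | [] => []
    | t :: ts => leaves t ++ leavesAux ts
end

mutual
  /-- The list of all subtrees (nodes) of a cotree, including itself. -/
  def subtrees : Cotree V → List (Cotree V)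
    | .leaf v => [.leaf v]
    | .node b ts => .node b ts :: subtreesAux ts
  def subtreesAux : List (Cotree V) → List (Cotree V)
    | [] => []
    | t :: ts => subtrees t ++ subtreesAux ts
end

/-- The clade (set of leaves) of a cotree node. -/
def leafSet [DecidableEq V] (t : Cotree V) : Finset V := t.leaves.toFinset

def isLeaf : Cotree V → Bool
  | .leaf _ => true
  | .node _ _ => false

/-- `v` is a leaf child of the 1-labeled node `s`. -/
def oneLeafChild : Cotree V → V → Prop
  | .node true ts, v => Cotree.leaf v ∈ ts
  | _, _ => False

/-- The adjacency relation defined by a cotree: `u` and `v` are adjacent iff their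
lowest common ancestor is a 1-node, i.e. some 1-node has `u`, `v` in two
distinct children. -/
def cAdj (T : Cotree V) (u v : V) : Prop :=
  ∃ ts : List (Cotree V), Cotree.node true ts ∈ T.subtrees ∧
    ∃ t₁ ∈ ts, ∃ t₂ ∈ ts, t₁ ≠ t₂ ∧ u ∈ t₁.leaves ∧ v ∈ t₂.leaves

end Cotree

/-- `T` is a cotree for the graph `G`: its leaves are exactly the vertices of `G`
(each occurring once), every internal node has at least two children, and two
vertices are adjacent in `G` iff their lowest common ancestor in `T` is a 1-node. -/
structure IsCotree (T : Cotree V) (G : SimpleGraph V) : Prop where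
  nodup : T.leaves.Nodup
  complete : ∀ v : V, v ∈ T.leaves
  arity : ∀ (b : Bool) (ts : List (Cotree V)), Cotree.node b ts ∈ T.subtrees → 2 ≤ ts.length
  adj : ∀ u v : V, G.Adj u v ↔ T.cAdj u v

/-- Every 1-labeled node of `T` has at most one non-leaf child. -/
def TPGCotree (T : Cotree V) : Prop :=
  ∀ ts : List (Cotree V), Cotree.node true ts ∈ T.subtrees →
    (ts.filter fun t => !t.isLeaf).length ≤ 1

/-- A graph is trivially perfect if it admits a cotree in which every 1-labeled
node has at most one non-leaf child. -/
def IsTPG (G : SimpleGraph V) : Prop :=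
  ∃ T : Cotree V, IsCotree T G ∧ TPGCotree T

/-- `X` grows in the part `C`. -/
def grows [DecidableEq V] (X C : Finset V) : Prop :=
  (C ∩ X).Nonempty ∧ (C \ X).Nonempty

/-- `X` grows in at most one part of `𝒞`. -/
def SingleGrowth [Fintype V] [DecidableEq V] (𝒞 : Finpartition (univ : Finset V))
    (X : Finset V) : Prop :=
  ∀ C₁ ∈ 𝒞.parts, ∀ C₂ ∈ 𝒞.parts, grows X C₁ → grows X C₂ → C₁ = C₂

/-- Every clade of `T` has single-growth in `𝒞`. -/
def AllSG [Fintype V] [DecidableEq V] (T : Cotree V)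
    (𝒞 : Finpartition (univ : Finset V)) : Prop :=
  ∀ s ∈ T.subtrees, SingleGrowth 𝒞 s.leafSet



namespace Cotree

@[simp] lemma leaves_leaf (v : V) : (leaf v : Cotree V).leaves = [v] := rfl
@[simp] lemma leaves_node (b : Bool) (ts : List (Cotree V)) :
    (node b ts : Cotree V).leaves = leavesAux ts := rfl
@[simp] lemma leavesAux_nil : (leavesAux ([] : List (Cotree V))) = [] := rfl
@[simp] lemma leavesAux_cons (t : Cotree V) (ts : List (Cotree V)) :
    leavesAux (t :: ts) = t.leaves ++ leavesAux ts := rfl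
@[simp] lemma subtrees_leaf (v : V) : (leaf v : Cotree V).subtrees = [leaf v] := rfl
@[simp] lemma subtrees_node (b : Bool) (ts : List (Cotree V)) :
    (node b ts : Cotree V).subtrees = node b ts :: subtreesAux ts := rfl
@[simp] lemma subtreesAux_nil : (subtreesAux ([] : List (Cotree V))) = [] := rfl
@[simp] lemma subtreesAux_cons (t : Cotree V) (ts : List (Cotree V)) :
    subtreesAux (t :: ts) = t.subtrees ++ subtreesAux ts := rfl

lemma mem_leavesAux {v : V} {ts : List (Cotree V)} :
    v ∈ leavesAux ts ↔ ∃ t ∈ ts, v ∈ t.leaves := by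
  induction ts with
  | nil => simp
  | cons t ts ih => simp [ih]

lemma mem_subtreesAux {s : Cotree V} {ts : List (Cotree V)} :
    s ∈ subtreesAux ts ↔ ∃ t ∈ ts, s ∈ t.subtrees := by
  induction ts with
  | nil => simp
  | cons t ts ih => simp [ih]

lemma self_mem_subtrees (t : Cotree V) : t ∈ t.subtrees := by
  cases t <;> simp

lemma child_mem_subtrees {t : Cotree V} {b : Bool} {ts : List (Cotree V)} (h : t ∈ ts) :
    t ∈ (node b ts : Cotree V).subtrees := by
  rw [subtrees_node, List.mem_cons]
  exact Or.inr (mem_subtreesAux.2 ⟨t, h, self_mem_subtrees t⟩)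

lemma subtrees_trans {s t : Cotree V} :
    ∀ (u : Cotree V), s ∈ t.subtrees → t ∈ u.subtrees → s ∈ u.subtrees
  | .leaf v, hst, htu => by
      simp only [subtrees_leaf, List.mem_singleton] at htu
      subst htu
      exact hst
  | .node b ts, hst, htu => by
      rw [subtrees_node, List.mem_cons] at htu
      rcases htu with rfl | htu
      · exact hst
      · rcases mem_subtreesAux.1 htu with ⟨c, hc, htc⟩
        have hrec := subtrees_trans c hst htc
        rw [subtrees_node, List.mem_cons]
        exact Or.inr (mem_subtreesAux.2 ⟨c, hc, hrec⟩)
  termination_by u => sizeOf u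
  decreasing_by
    have := List.sizeOf_lt_of_mem hc
    simp only [Cotree.node.sizeOf_spec]
    omega

lemma leaves_subset {s : Cotree V} :
    ∀ (t : Cotree V), s ∈ t.subtrees → ∀ v ∈ s.leaves, v ∈ t.leaves
  | .leaf w, hs, v, hv => by
      simp only [subtrees_leaf, List.mem_singleton] at hs
      subst hs; exact hv
  | .node b ts, hs, v, hv => by
      rw [subtrees_node, List.mem_cons] at hs
      rcases hs with rfl | hs
      · exact hv
      · rcases mem_subtreesAux.1 hs with ⟨c, hc, hsc⟩
        have hrec := leaves_subset c hsc v hv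
        rw [leaves_node]
        exact mem_leavesAux.2 ⟨c, hc, hrec⟩
  termination_by t => sizeOf t
  decreasing_by
    have := List.sizeOf_lt_of_mem hc
    simp only [Cotree.node.sizeOf_spec]
    omega

lemma nodup_leavesAux_of_mem {ts : List (Cotree V)} (h : (leavesAux ts).Nodup)
    {c : Cotree V} (hc : c ∈ ts) : c.leaves.Nodup := by
  induction ts with
  | nil => simp at hc
  | cons t ts ih =>
    rw [leavesAux_cons] at h
    rcases List.mem_cons.1 hc with rfl | hc
    · exact h.of_append_left
    · exact ih h.of_append_right hc

lemma disjoint_children {ts : List (Cotree V)} (h : (leavesAux ts).Nodup) {c₁ c₂ : Cotree V}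
    (h1 : c₁ ∈ ts) (h2 : c₂ ∈ ts) (hne : c₁ ≠ c₂) {v : V}
    (hv1 : v ∈ c₁.leaves) (hv2 : v ∈ c₂.leaves) : False := by
  induction ts with
  | nil => simp at h1
  | cons t ts ih =>
    rw [leavesAux_cons] at h
    have hd := List.disjoint_of_nodup_append h
    rcases List.mem_cons.1 h1 with he1 | h1'
    · rcases List.mem_cons.1 h2 with he2 | h2'
      · exact hne (he1.trans he2.symm)
      · exact hd (he1 ▸ hv1) (mem_leavesAux.2 ⟨c₂, h2', hv2⟩)
    · rcases List.mem_cons.1 h2 with he2 | h2'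
      · exact hd (he2 ▸ hv2) (mem_leavesAux.2 ⟨c₁, h1', hv1⟩)
      · exact ih h.of_append_right h1' h2'

lemma laminar : ∀ (T : Cotree V), T.leaves.Nodup → ∀ (s t : Cotree V),
    s ∈ T.subtrees → t ∈ T.subtrees →
    (∀ v ∈ s.leaves, v ∈ t.leaves) ∨ (∀ v ∈ t.leaves, v ∈ s.leaves) ∨
      (∀ v, v ∈ s.leaves → v ∈ t.leaves → False)
  | .leaf w, _, s, t, hs, ht => by
      simp only [subtrees_leaf, List.mem_singleton] at hs ht
      subst hs; subst ht
      exact Or.inl fun v h => h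
  | .node b ts, h, s, t, hs0, ht0 => by
      have hs := hs0; have ht := ht0
      rw [subtrees_node] at hs ht
      rcases List.mem_cons.1 ht with het | ht'
      · subst het
        exact Or.inl (leaves_subset _ hs0)
      rcases List.mem_cons.1 hs with hes | hs'
      · subst hes
        exact Or.inr (Or.inl (leaves_subset _ ht0))
      rcases mem_subtreesAux.1 hs' with ⟨c₁, hc₁, hsc⟩
      rcases mem_subtreesAux.1 ht' with ⟨c₂, hc₂, htc⟩
      by_cases hcc : c₁ = c₂
      · subst hcc
        exact laminar c₁ (nodup_leavesAux_of_mem (by rwa [leaves_node] at h) hc₁) s t hsc htc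
      · refine Or.inr (Or.inr fun v hv1 hv2 => ?_)
        exact disjoint_children (by rwa [leaves_node] at h) hc₁ hc₂ hcc
          (leaves_subset _ hsc v hv1) (leaves_subset _ htc v hv2)
  termination_by T => sizeOf T
  decreasing_by
    have := List.sizeOf_lt_of_mem hc₁
    simp only [Cotree.node.sizeOf_spec]
    omega

lemma nodup_leaves_subtree : ∀ (t : Cotree V), t.leaves.Nodup → ∀ (s : Cotree V),
    s ∈ t.subtrees → s.leaves.Nodup
  | .leaf w, h, s, hs => by
      simp only [subtrees_leaf, List.mem_singleton] at hs
      subst hs; exact h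
  | .node b ts, h, s, hs0 => by
      have hs := hs0
      rw [subtrees_node] at hs
      rcases List.mem_cons.1 hs with hes | hs'
      · subst hes; exact h
      · rcases mem_subtreesAux.1 hs' with ⟨c, hc, hsc⟩
        exact nodup_leaves_subtree c (nodup_leavesAux_of_mem (by rwa [leaves_node] at h) hc) s hsc
  termination_by t => sizeOf t
  decreasing_by
    have := List.sizeOf_lt_of_mem hc
    simp only [Cotree.node.sizeOf_spec]
    omega

lemma uniform_cAdj {T : Cotree V} (hnd : T.leaves.Nodup) {s : Cotree V} (hs : s ∈ T.subtrees)
    {b x y : V} (hb : b ∉ s.leaves) (hx : x ∈ s.leaves) (hy : y ∈ s.leaves) :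
    T.cAdj b x → T.cAdj b y := by
  rintro ⟨ts, hts, t₁, ht₁, t₂, ht₂, hne, hbt, hxt⟩
  have h1T : t₁ ∈ T.subtrees := subtrees_trans T (child_mem_subtrees (b := true) ht₁) hts
  have h2T : t₂ ∈ T.subtrees := subtrees_trans T (child_mem_subtrees (b := true) ht₂) hts
  have hndts : (leavesAux ts).Nodup := by
    have := nodup_leaves_subtree T hnd _ hts
    rwa [leaves_node] at this
  rcases laminar T hnd s t₂ hs h2T with hsub | hsub | hdis
  · exact ⟨ts, hts, t₁, ht₁, t₂, ht₂, hne, hbt, hsub y hy⟩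
  · -- t₂.leaves ⊆ s.leaves; compare s with the node
    rcases laminar T hnd s _ hs hts with hsub2 | hsub2 | hdis2
    · -- s.leaves ⊆ leavesAux ts
      have hyn : y ∈ leavesAux ts := by
        have := hsub2 y hy
        rwa [leaves_node] at this
      rcases mem_leavesAux.1 hyn with ⟨t₃, ht₃, hyt₃⟩
      by_cases h31 : t₃ = t₁
      · have hyt₁ : y ∈ t₁.leaves := h31 ▸ hyt₃
        rcases laminar T hnd s t₁ hs h1T with hsub3 | hsub3 | hdis3
        · exact absurd (hsub3 x hx) (fun hx1 => disjoint_children hndts ht₁ ht₂ hne hx1 hxt)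
        · exact absurd (hsub3 b hbt) hb
        · exact absurd hyt₁ (fun hy1 => hdis3 y hy hy1)
      · exact ⟨ts, hts, t₁, ht₁, t₃, ht₃, fun h => h31 h.symm, hbt, hyt₃⟩
    · -- leavesAux ts ⊆ s.leaves: b ∈ s.leaves, contradiction
      exact absurd (hsub2 b (by rw [leaves_node]; exact mem_leavesAux.2 ⟨t₁, ht₁, hbt⟩)) hb
    · -- disjoint: x in both
      exact absurd (hdis2 x hx (by rw [leaves_node]; exact mem_leavesAux.2 ⟨t₂, ht₂, hxt⟩)) id
  · exact absurd (hdis x hx hxt) id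

end Cotree

section Machinery

variable [Fintype V] [DecidableEq V]

/-- Auxiliary: the pair `e` lies within a single part of `P`. -/
def within (P : Finpartition (univ : Finset V)) (e : Sym2 V) : Prop :=
  ∃ C ∈ P.parts, ∀ v ∈ e, v ∈ C

lemma cost_eq (G : SimpleGraph V) (P : Finpartition (univ : Finset V)) :
    cost G P = {e : Sym2 V | e ∈ G.edgeSet ∧ ¬ within P e}.ncard
      + {e : Sym2 V | e ∈ Gᶜ.edgeSet ∧ within P e}.ncard := by
  unfold cost costOn within
  congr 2
  ext e
  simp

/-- Auxiliary: `e` has one endpoint in `S` and one in `T`. -/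
def crossP (S T : Finset V) (e : Sym2 V) : Prop :=
  ∃ u v : V, e = s(u, v) ∧ u ∈ S ∧ v ∈ T

omit [Fintype V] [DecidableEq V] in
lemma crossP_mk {S T : Finset V} {u v : V} :
    crossP S T s(u, v) ↔ (u ∈ S ∧ v ∈ T) ∨ (v ∈ S ∧ u ∈ T) := by
  constructor
  · rintro ⟨a, b, he, ha, hb⟩
    rcases Sym2.eq_iff.1 he with ⟨h1, h2⟩ | ⟨h1, h2⟩
    · subst h1; subst h2; exact Or.inl ⟨ha, hb⟩
    · subst h1; subst h2; exact Or.inr ⟨ha, hb⟩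
  · rintro (⟨h1, h2⟩ | ⟨h1, h2⟩)
    · exact ⟨u, v, rfl, h1, h2⟩
    · exact ⟨v, u, Sym2.eq_swap, h1, h2⟩

lemma within_mk {P : Finpartition (univ : Finset V)} {u v : V} :
    within P s(u, v) ↔ ∃ D ∈ P.parts, u ∈ D ∧ v ∈ D := by
  unfold within
  refine exists_congr fun D => and_congr_right fun _ => ?_
  constructor
  · intro h; exact ⟨h u (by simp), h v (by simp)⟩
  · rintro ⟨h1, h2⟩ w hw
    rcases Sym2.mem_iff.1 hw with rfl | rfl <;> assumption

lemma ncard_cross_eq (G : SimpleGraph V) (S T : Finset V) (hST : ∀ x ∈ S, x ∉ T)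
    (q : V → Prop) [DecidablePred q] (hq : ∀ u ∈ S, ∀ v ∈ T, (G.Adj u v ↔ q v)) :
    {e : Sym2 V | e ∈ G.edgeSet ∧ crossP S T e}.ncard = S.card * (T.filter q).card := by
  classical
  have hset : {e : Sym2 V | e ∈ G.edgeSet ∧ crossP S T e}
      = ↑((S ×ˢ T.filter q).image fun p => s(p.1, p.2)) := by
    ext e
    induction e using Sym2.ind with
    | _ u v =>
      simp only [Set.mem_setOf_eq, SimpleGraph.mem_edgeSet, crossP_mk, coe_image, Set.mem_image,
        mem_coe, mem_product, mem_filter]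
      constructor
      · rintro ⟨hadj, ⟨hu, hv⟩ | ⟨hv, hu⟩⟩
        · exact ⟨(u, v), ⟨hu, hv, (hq u hu v hv).1 hadj⟩, rfl⟩
        · exact ⟨(v, u), ⟨hv, hu, (hq v hv u hu).1 hadj.symm⟩, Sym2.eq_swap⟩
      · rintro ⟨⟨a, b⟩, ⟨ha, hb, hqb⟩, he⟩
        have hadj : G.Adj a b := (hq a ha b hb).2 hqb
        rcases Sym2.eq_iff.1 he with ⟨h1, h2⟩ | ⟨h1, h2⟩
        · subst h1; subst h2; exact ⟨hadj, Or.inl ⟨ha, hb⟩⟩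
        · subst h1; subst h2; exact ⟨hadj.symm, Or.inr ⟨ha, hb⟩⟩
  rw [hset, Set.ncard_coe_finset, Finset.card_image_of_injOn, card_product]
  intro p hp p' hp' he
  simp only [mem_coe, mem_product, mem_filter] at hp hp'
  rcases Sym2.eq_iff.1 he with ⟨h1, h2⟩ | ⟨h1, h2⟩
  · exact Prod.ext h1 h2
  · exact (hST p.1 hp.1 (by rw [h1]; exact hp'.2.1)).elim

/-- Replace a set of parts of a partition of `univ` by new parts covering the
same vertices. -/
def replaceParts (𝒞 : Finpartition (univ : Finset V)) (old new : Finset (Finset V))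
    (hold : old ⊆ 𝒞.parts) (hsup : new.sup id = old.sup id)
    (hnewdisj : (↑new : Set (Finset V)).PairwiseDisjoint id)
    (hmixdisj : ∀ N ∈ new, ∀ D ∈ 𝒞.parts, D ∉ old → Disjoint N D)
    (hne : ∅ ∉ new) : Finpartition (univ : Finset V) where
  parts := (𝒞.parts \ old) ∪ new
  supIndep := by
    rw [Finset.supIndep_iff_pairwiseDisjoint]
    intro a ha b hb hab
    simp only [coe_union, Set.mem_union, mem_coe, mem_sdiff] at ha hb
    rcases ha with ⟨ha, hao⟩ | ha <;> rcases hb with ⟨hb, hbo⟩ | hb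
    · exact 𝒞.disjoint ha hb hab
    · exact (hmixdisj b hb a ha hao).symm
    · exact hmixdisj a ha b hb hbo
    · exact hnewdisj ha hb hab
  sup_parts := by
    rw [Finset.sup_union, hsup, ← Finset.sup_union, Finset.sdiff_union_of_subset hold]
    exact 𝒞.sup_parts
  bot_notMem := by
    simp only [bot_eq_empty, mem_union, mem_sdiff]
    rintro (⟨h, -⟩ | h)
    · exact 𝒞.bot_notMem h
    · exact hne h

lemma replaceParts_parts (𝒞 : Finpartition (univ : Finset V)) (old new : Finset (Finset V))
    (hold hsup hnewdisj hmixdisj hne) :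
    (replaceParts 𝒞 old new hold hsup hnewdisj hmixdisj hne).parts
      = (𝒞.parts \ old) ∪ new := rfl

end Machinery

set_option maxHeartbeats 2000000 in
theorem statement12 {V : Type u} [Fintype V] [DecidableEq V] (G : SimpleGraph V)
    (T : Cotree V) (hT : IsCotree T G) (hTPG : TPGCotree T)
    (𝒞 : Finpartition (univ : Finset V))
    (hopt : IsOptimal G 𝒞) (hsg : AllSG T 𝒞)
    (hmax : ∀ 𝒟 : Finpartition (univ : Finset V),
      IsOptimal G 𝒟 → AllSG T 𝒟 → 𝒟.parts.card ≤ 𝒞.parts.card)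
    (s : Cotree V) (hs : s ∈ T.subtrees) :
    (∀ C ∈ 𝒞.parts, ¬ grows s.leafSet C) ∨
    (∃ C ∈ 𝒞.parts, grows s.leafSet C ∧
      (∀ C' ∈ 𝒞.parts, grows s.leafSet C' → C' = C) ∧
      ∀ C' ∈ 𝒞.parts, (s.leafSet ∩ C').card ≤ (s.leafSet ∩ C).card) := by
  classical
  by_cases hgrow : ∀ C ∈ 𝒞.parts, ¬ grows s.leafSet C
  · exact Or.inl hgrow
  right
  push_neg at hgrow
  obtain ⟨C, hCp, hCg⟩ := hgrow
  refine ⟨C, hCp, hCg, fun C'' hC'' h'' => hsg s hs C'' hC'' C hCp h'' hCg, ?_⟩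
  by_contra hcon
  push_neg at hcon
  obtain ⟨C', hC'p, hlt⟩ := hcon
  set X := s.leafSet with hXdef
  set A := C ∩ X with hAdef
  set B := C \ X with hBdef
  have hAC : A ⊆ C := inter_subset_left
  have hBC : B ⊆ C := sdiff_subset
  have hCC' : C' ≠ C := by rintro rfl; exact lt_irrefl _ hlt
  have hAne : A.Nonempty := hCg.1
  have hBne : B.Nonempty := hCg.2
  have hC'ng : ¬ grows X C' := fun h => hCC' (hsg s hs C' hC'p C hCp h hCg)
  have hintC' : (C' ∩ X).Nonempty := by
    rw [inter_comm]
    exact card_pos.1 (lt_of_le_of_lt (Nat.zero_le _) hlt)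
  have hC'X : C' ⊆ X := by
    by_contra hsub
    exact hC'ng ⟨hintC', sdiff_nonempty.2 hsub⟩
  have hXC' : X ∩ C' = C' := by rw [inter_comm]; exact inter_eq_left.2 hC'X
  have hXA : X ∩ C = A := inter_comm X C
  have hlt' : A.card < C'.card := by rwa [hXA, hXC'] at hlt
  have hABdisj : Disjoint A B :=
    Finset.disjoint_left.2 fun x hxA hxB => (mem_sdiff.1 hxB).2 (mem_inter.1 hxA).2
  have hABC : A ∪ B = C := by
    ext x
    simp only [mem_union, hAdef, hBdef, mem_inter, mem_sdiff]
    by_cases hx : x ∈ X <;> simp [hx]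
  have hCdisjC' : Disjoint C C' := 𝒞.disjoint hCp hC'p (Ne.symm hCC')
  have hAC'disj : Disjoint A C' := disjoint_of_subset_left hAC hCdisjC'
  have hBC'disj : Disjoint B C' := disjoint_of_subset_left hBC hCdisjC'
  have hAne2 := hAne
  obtain ⟨x₀, hx₀⟩ := hAne2
  have hx₀X : x₀ ∈ X := (mem_inter.1 hx₀).2
  set q : V → Prop := fun v => G.Adj v x₀ with hqdef
  have hmemX : ∀ w, w ∈ X ↔ w ∈ s.leaves := fun w => List.mem_toFinset
  have huni : ∀ u ∈ X, ∀ v, v ∉ X → (G.Adj u v ↔ q v) := by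
    intro u hu v hv
    rw [G.adj_comm]
    constructor
    · intro h
      exact (hT.adj v x₀).2 (Cotree.uniform_cAdj hT.nodup hs (fun hc => hv ((hmemX v).2 hc))
        ((hmemX u).1 hu) ((hmemX x₀).1 hx₀X) ((hT.adj v u).1 h))
    · intro h
      exact (hT.adj v u).2 (Cotree.uniform_cAdj hT.nodup hs (fun hc => hv ((hmemX v).2 hc))
        ((hmemX x₀).1 hx₀X) ((hmemX u).1 hu) ((hT.adj v x₀).1 h))
  have hBX : ∀ v ∈ B, v ∉ X := fun v hv => (mem_sdiff.1 hv).2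
  have hqAB : ∀ u ∈ A, ∀ v ∈ B, (G.Adj u v ↔ q v) :=
    fun u hu v hv => huni u (mem_inter.1 hu).2 v (hBX v hv)
  have hqC'B : ∀ u ∈ C', ∀ v ∈ B, (G.Adj u v ↔ q v) :=
    fun u hu v hv => huni u (hC'X hu) v (hBX v hv)
  have hneAB : ∀ u ∈ A, ∀ v ∈ B, u ≠ v :=
    fun u hu v hv he => hBX v hv (he ▸ (mem_inter.1 hu).2)
  have hneC'B : ∀ u ∈ C', ∀ v ∈ B, u ≠ v :=
    fun u hu v hv he => hBX v hv (he ▸ hC'X hu)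
  have hq'AB : ∀ u ∈ A, ∀ v ∈ B, (Gᶜ.Adj u v ↔ ¬ q v) := by
    intro u hu v hv
    rw [SimpleGraph.compl_adj]
    constructor
    · rintro ⟨-, h⟩; exact fun hqv => h ((hqAB u hu v hv).2 hqv)
    · intro h; exact ⟨hneAB u hu v hv, fun ha => h ((hqAB u hu v hv).1 ha)⟩
  have hq'C'B : ∀ u ∈ C', ∀ v ∈ B, (Gᶜ.Adj u v ↔ ¬ q v) := by
    intro u hu v hv
    rw [SimpleGraph.compl_adj]
    constructor
    · rintro ⟨-, h⟩; exact fun hqv => h ((hqC'B u hu v hv).2 hqv)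
    · intro h; exact ⟨hneC'B u hu v hv, fun ha => h ((hqC'B u hu v hv).1 ha)⟩
  -- cardinalities of the four cross sets
  have hEAB : {e : Sym2 V | e ∈ G.edgeSet ∧ crossP A B e}.ncard
      = A.card * (B.filter q).card :=
    ncard_cross_eq G A B (fun x hx => Finset.disjoint_left.1 hABdisj hx) q hqAB
  have hNEAB : {e : Sym2 V | e ∈ Gᶜ.edgeSet ∧ crossP A B e}.ncard
      = A.card * (B.filter fun v => ¬ q v).card :=
    ncard_cross_eq Gᶜ A B (fun x hx => Finset.disjoint_left.1 hABdisj hx) _ hq'AB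
  have hEC'B : {e : Sym2 V | e ∈ G.edgeSet ∧ crossP C' B e}.ncard
      = C'.card * (B.filter q).card :=
    ncard_cross_eq G C' B (fun x hx => Finset.disjoint_left.1 hBC'disj.symm hx) q hqC'B
  have hNEC'B : {e : Sym2 V | e ∈ Gᶜ.edgeSet ∧ crossP C' B e}.ncard
      = C'.card * (B.filter fun v => ¬ q v).card :=
    ncard_cross_eq Gᶜ C' B (fun x hx => Finset.disjoint_left.1 hBC'disj.symm hx) _ hq'C'B
  -- cross facts
  have hcw : ∀ u v : V, crossP A B s(u, v) → within 𝒞 s(u, v) := by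
    intro u v h
    rcases crossP_mk.1 h with ⟨hu, hv⟩ | ⟨hv, hu⟩
    · exact within_mk.2 ⟨C, hCp, hAC hu, hBC hv⟩
    · exact within_mk.2 ⟨C, hCp, hBC hu, hAC hv⟩
  have hcnw : ∀ u v : V, crossP C' B s(u, v) → ¬ within 𝒞 s(u, v) := by
    intro u v h hw
    obtain ⟨D, hDp, huD, hvD⟩ := within_mk.1 hw
    rcases crossP_mk.1 h with ⟨hu, hv⟩ | ⟨hv, hu⟩
    · exact hCC' ((𝒞.eq_of_mem_parts hC'p hDp hu huD).trans
        (𝒞.eq_of_mem_parts hDp hCp hvD (hBC hv)))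
    · exact hCC' ((𝒞.eq_of_mem_parts hC'p hDp hv hvD).trans
        (𝒞.eq_of_mem_parts hDp hCp huD (hBC hu)))
  have hcc' : ∀ u v : V, crossP A B s(u, v) → crossP C' B s(u, v) → False := by
    intro u v h1 h2
    rcases crossP_mk.1 h1 with ⟨hu, hv⟩ | ⟨hv, hu⟩ <;>
      rcases crossP_mk.1 h2 with ⟨hu', hv'⟩ | ⟨hv', hu'⟩
    · exact Finset.disjoint_left.1 hAC'disj hu hu'
    · exact Finset.disjoint_left.1 hABdisj hu hu'
    · exact Finset.disjoint_left.1 hABdisj hv hv'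
    · exact Finset.disjoint_left.1 hAC'disj hv hv'
  -- the split partition D3
  have hold3 : ({C} : Finset (Finset V)) ⊆ 𝒞.parts := singleton_subset_iff.2 hCp
  have hsup3 : ({A, B} : Finset (Finset V)).sup id = ({C} : Finset (Finset V)).sup id := by
    simp only [sup_insert, sup_singleton, id_eq]
    rw [sup_eq_union, hABC]
  have hnd3 : (↑({A, B} : Finset (Finset V)) : Set (Finset V)).PairwiseDisjoint id := by
    intro a ha b hb hab
    simp only [coe_insert, coe_singleton, Set.mem_insert_iff, Set.mem_singleton_iff] at ha hb
    rcases ha with rfl | rfl <;> rcases hb with rfl | rfl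
    · exact absurd rfl hab
    · exact hABdisj
    · exact hABdisj.symm
    · exact absurd rfl hab
  have hmix3 : ∀ N ∈ ({A, B} : Finset (Finset V)), ∀ D ∈ 𝒞.parts,
      D ∉ ({C} : Finset (Finset V)) → Disjoint N D := by
    intro N hN D hD hDC
    have hDC' : C ≠ D := fun h => hDC (by simp [h.symm])
    have hCD : Disjoint C D := 𝒞.disjoint hCp hD hDC'
    rcases mem_insert.1 hN with rfl | hN
    · exact disjoint_of_subset_left hAC hCD
    · rw [mem_singleton] at hN
      subst hN
      exact disjoint_of_subset_left hBC hCD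
  have hne3 : ∅ ∉ ({A, B} : Finset (Finset V)) := by
    simp only [mem_insert, mem_singleton]
    rintro (h | h)
    · exact (Finset.nonempty_iff_ne_empty.1 hAne) h.symm
    · exact (Finset.nonempty_iff_ne_empty.1 hBne) h.symm
  set D3 := replaceParts 𝒞 {C} {A, B} hold3 hsup3 hnd3 hmix3 hne3 with hD3def
  have hD3parts : D3.parts = (𝒞.parts \ {C}) ∪ {A, B} := rfl
  -- the swap partition D2
  have hold2 : ({C, C'} : Finset (Finset V)) ⊆ 𝒞.parts := by
    intro D hD
    rcases mem_insert.1 hD with rfl | hD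
    · exact hCp
    · rw [mem_singleton] at hD; subst hD; exact hC'p
  have hsup2 : ({A, B ∪ C'} : Finset (Finset V)).sup id
      = ({C, C'} : Finset (Finset V)).sup id := by
    simp only [sup_insert, sup_singleton, id_eq, sup_eq_union]
    rw [← union_assoc, hABC]
  have hnd2 : (↑({A, B ∪ C'} : Finset (Finset V)) : Set (Finset V)).PairwiseDisjoint id := by
    intro a ha b hb hab
    simp only [coe_insert, coe_singleton, Set.mem_insert_iff, Set.mem_singleton_iff] at ha hb
    have hd : Disjoint A (B ∪ C') := disjoint_union_right.2 ⟨hABdisj, hAC'disj⟩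
    rcases ha with rfl | rfl <;> rcases hb with rfl | rfl
    · exact absurd rfl hab
    · exact hd
    · exact hd.symm
    · exact absurd rfl hab
  have hmix2 : ∀ N ∈ ({A, B ∪ C'} : Finset (Finset V)), ∀ D ∈ 𝒞.parts,
      D ∉ ({C, C'} : Finset (Finset V)) → Disjoint N D := by
    intro N hN D hD hDm
    have hDC : C ≠ D := fun h => hDm (by simp [h.symm])
    have hDC' : C' ≠ D := fun h => hDm (by simp [h.symm])
    have h1 : Disjoint C D := 𝒞.disjoint hCp hD hDC
    have h2 : Disjoint C' D := 𝒞.disjoint hC'p hD hDC'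
    rcases mem_insert.1 hN with rfl | hN
    · exact disjoint_of_subset_left hAC h1
    · rw [mem_singleton] at hN
      subst hN
      exact disjoint_union_left.2 ⟨disjoint_of_subset_left hBC h1, h2⟩
  have hne2 : ∅ ∉ ({A, B ∪ C'} : Finset (Finset V)) := by
    simp only [mem_insert, mem_singleton]
    rintro (h | h)
    · exact (Finset.nonempty_iff_ne_empty.1 hAne) h.symm
    · exact (Finset.nonempty_iff_ne_empty.1 (hBne.mono subset_union_left)) h.symm
  set D2 := replaceParts 𝒞 {C, C'} {A, B ∪ C'} hold2 hsup2 hnd2 hmix2 hne2 with hD2def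
  have hD2parts : D2.parts = (𝒞.parts \ {C, C'}) ∪ {A, B ∪ C'} := rfl
  -- within characterizations
  have hw3 : ∀ u v : V, within D3 s(u, v) ↔ (within 𝒞 s(u, v) ∧ ¬ crossP A B s(u, v)) := by
    intro u v
    rw [within_mk, within_mk]
    constructor
    · rintro ⟨D, hD, hu, hv⟩
      rw [hD3parts, mem_union] at hD
      rcases hD with hD | hD
      · obtain ⟨hDp, hDC⟩ := mem_sdiff.1 hD
        rw [mem_singleton] at hDC
        refine ⟨⟨D, hDp, hu, hv⟩, ?_⟩
        intro hcr
        rcases crossP_mk.1 hcr with ⟨huA, hvB⟩ | ⟨hvA, huB⟩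
        · exact hDC (𝒞.eq_of_mem_parts hDp hCp hu (hAC huA))
        · exact hDC (𝒞.eq_of_mem_parts hDp hCp hv (hAC hvA))
      · rcases mem_insert.1 hD with rfl | hD
        · refine ⟨⟨C, hCp, hAC hu, hAC hv⟩, ?_⟩
          intro hcr
          rcases crossP_mk.1 hcr with ⟨huA, hvB⟩ | ⟨hvA, huB⟩
          · exact Finset.disjoint_left.1 hABdisj hv hvB
          · exact Finset.disjoint_left.1 hABdisj hu huB
        · rw [mem_singleton] at hD
          subst hD
          refine ⟨⟨C, hCp, hBC hu, hBC hv⟩, ?_⟩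
          intro hcr
          rcases crossP_mk.1 hcr with ⟨huA, hvB⟩ | ⟨hvA, huB⟩
          · exact Finset.disjoint_left.1 hABdisj huA hu
          · exact Finset.disjoint_left.1 hABdisj hvA hv
    · rintro ⟨⟨D, hDp, hu, hv⟩, hnc⟩
      by_cases hDC : D = C
      · subst hDC
        have hu' : u ∈ A ∪ B := hABC ▸ hu
        have hv' : v ∈ A ∪ B := hABC ▸ hv
        rcases mem_union.1 hu' with huA | huB <;> rcases mem_union.1 hv' with hvA | hvB
        · exact ⟨A, by rw [hD3parts]; exact mem_union_right _ (mem_insert_self _ _), huA, hvA⟩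
        · exact absurd (crossP_mk.2 (Or.inl ⟨huA, hvB⟩)) hnc
        · exact absurd (crossP_mk.2 (Or.inr ⟨hvA, huB⟩)) hnc
        · exact ⟨B, by
            rw [hD3parts]
            exact mem_union_right _ (mem_insert_of_mem (mem_singleton_self _)), huB, hvB⟩
      · exact ⟨D, by
          rw [hD3parts]
          exact mem_union_left _ (mem_sdiff.2 ⟨hDp, by simpa using hDC⟩), hu, hv⟩
  have hw2 : ∀ u v : V, within D2 s(u, v) ↔
      ((within 𝒞 s(u, v) ∧ ¬ crossP A B s(u, v)) ∨ crossP C' B s(u, v)) := by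
    intro u v
    rw [within_mk, within_mk]
    constructor
    · rintro ⟨D, hD, hu, hv⟩
      rw [hD2parts, mem_union] at hD
      rcases hD with hD | hD
      · obtain ⟨hDp, hDm⟩ := mem_sdiff.1 hD
        have hDC : D ≠ C := fun h => hDm (by simp [h])
        refine Or.inl ⟨⟨D, hDp, hu, hv⟩, ?_⟩
        intro hcr
        rcases crossP_mk.1 hcr with ⟨huA, hvB⟩ | ⟨hvA, huB⟩
        · exact hDC (𝒞.eq_of_mem_parts hDp hCp hu (hAC huA))
        · exact hDC (𝒞.eq_of_mem_parts hDp hCp hv (hAC hvA))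
      · rcases mem_insert.1 hD with rfl | hD
        · refine Or.inl ⟨⟨C, hCp, hAC hu, hAC hv⟩, ?_⟩
          intro hcr
          rcases crossP_mk.1 hcr with ⟨huA, hvB⟩ | ⟨hvA, huB⟩
          · exact Finset.disjoint_left.1 hABdisj hv hvB
          · exact Finset.disjoint_left.1 hABdisj hu huB
        · rw [mem_singleton] at hD
          subst hD
          rcases mem_union.1 hu with huB | huC' <;> rcases mem_union.1 hv with hvB | hvC'
          · refine Or.inl ⟨⟨C, hCp, hBC huB, hBC hvB⟩, ?_⟩
            intro hcr
            rcases crossP_mk.1 hcr with ⟨huA, hvB'⟩ | ⟨hvA, huB'⟩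
            · exact Finset.disjoint_left.1 hABdisj huA huB
            · exact Finset.disjoint_left.1 hABdisj hvA hvB
          · exact Or.inr (crossP_mk.2 (Or.inr ⟨hvC', huB⟩))
          · exact Or.inr (crossP_mk.2 (Or.inl ⟨huC', hvB⟩))
          · refine Or.inl ⟨⟨C', hC'p, huC', hvC'⟩, ?_⟩
            intro hcr
            rcases crossP_mk.1 hcr with ⟨huA, hvB'⟩ | ⟨hvA, huB'⟩
            · exact Finset.disjoint_left.1 hAC'disj huA huC'
            · exact Finset.disjoint_left.1 hAC'disj hvA hvC'
    · rintro (⟨⟨D, hDp, hu, hv⟩, hnc⟩ | hcr)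
      · by_cases hDC : D = C
        · subst hDC
          have hu' : u ∈ A ∪ B := hABC ▸ hu
          have hv' : v ∈ A ∪ B := hABC ▸ hv
          rcases mem_union.1 hu' with huA | huB <;> rcases mem_union.1 hv' with hvA | hvB
          · exact ⟨A, by rw [hD2parts]; exact mem_union_right _ (mem_insert_self _ _), huA, hvA⟩
          · exact absurd (crossP_mk.2 (Or.inl ⟨huA, hvB⟩)) hnc
          · exact absurd (crossP_mk.2 (Or.inr ⟨hvA, huB⟩)) hnc
          · refine ⟨B ∪ C', ?_, mem_union_left _ huB, mem_union_left _ hvB⟩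
            rw [hD2parts]
            exact mem_union_right _ (mem_insert_of_mem (mem_singleton_self _))
        · by_cases hDC' : D = C'
          · refine ⟨B ∪ C', ?_, mem_union_right _ (hDC' ▸ hu), mem_union_right _ (hDC' ▸ hv)⟩
            rw [hD2parts]
            exact mem_union_right _ (mem_insert_of_mem (mem_singleton_self _))
          · refine ⟨D, ?_, hu, hv⟩
            rw [hD2parts]
            refine mem_union_left _ (mem_sdiff.2 ⟨hDp, ?_⟩)
            simp [hDC, hDC']
      · rcases crossP_mk.1 hcr with ⟨huC', hvB⟩ | ⟨hvC', huB⟩ <;>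
          refine ⟨B ∪ C', by
            rw [hD2parts]
            exact mem_union_right _ (mem_insert_of_mem (mem_singleton_self _)), ?_, ?_⟩
        · exact mem_union_right _ huC'
        · exact mem_union_left _ hvB
        · exact mem_union_left _ huB
        · exact mem_union_right _ hvC'
  -- abbreviations for the six sets
  set cutC := {e : Sym2 V | e ∈ G.edgeSet ∧ ¬ within 𝒞 e} with hcutC
  set inC := {e : Sym2 V | e ∈ Gᶜ.edgeSet ∧ within 𝒞 e} with hinC
  set EAB := {e : Sym2 V | e ∈ G.edgeSet ∧ crossP A B e} with hEABdef
  set NEAB := {e : Sym2 V | e ∈ Gᶜ.edgeSet ∧ crossP A B e} with hNEABdef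
  set EC'B := {e : Sym2 V | e ∈ G.edgeSet ∧ crossP C' B e} with hECBdef
  set NEC'B := {e : Sym2 V | e ∈ Gᶜ.edgeSet ∧ crossP C' B e} with hNECBdef
  have hfin : ∀ S : Set (Sym2 V), S.Finite := fun S => S.toFinite
  -- D3 cost equation
  have hc3 : {e : Sym2 V | e ∈ G.edgeSet ∧ ¬ within D3 e} = cutC ∪ EAB := by
    ext e
    induction e using Sym2.ind with
    | _ u v =>
      simp only [Set.mem_setOf_eq, Set.mem_union, hcutC, hEABdef, hw3 u v]
      have := hcw u v
      tauto
  have hi3 : {e : Sym2 V | e ∈ Gᶜ.edgeSet ∧ within D3 e} = inC \ NEAB := by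
    ext e
    induction e using Sym2.ind with
    | _ u v =>
      simp only [Set.mem_setOf_eq, Set.mem_diff, hinC, hNEABdef, hw3 u v]
      have := hcw u v
      tauto
  have hdc : Disjoint cutC EAB := by
    rw [Set.disjoint_left]
    intro e he he'
    induction e using Sym2.ind with
    | _ u v => exact he.2 (hcw u v he'.2)
  have hNEsub : NEAB ⊆ inC := by
    intro e he
    induction e using Sym2.ind with
    | _ u v => exact ⟨he.1, hcw u v he.2⟩
  have h3eq : cost G D3 + NEAB.ncard = cost G 𝒞 + EAB.ncard := by
    rw [cost_eq, cost_eq, hc3, hi3, ← hcutC, ← hinC,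
      Set.ncard_union_eq hdc (hfin _) (hfin _)]
    have := Set.ncard_diff_add_ncard_of_subset hNEsub (hfin _)
    omega
  -- D2 cost equation
  have hc2 : {e : Sym2 V | e ∈ G.edgeSet ∧ ¬ within D2 e} = (cutC \ EC'B) ∪ EAB := by
    ext e
    induction e using Sym2.ind with
    | _ u v =>
      simp only [Set.mem_setOf_eq, Set.mem_union, Set.mem_diff, hcutC, hEABdef, hECBdef, hw2 u v]
      have h1 := hcw u v
      have h2 := hcnw u v
      have h3 := hcc' u v
      tauto
  have hi2 : {e : Sym2 V | e ∈ Gᶜ.edgeSet ∧ within D2 e} = (inC \ NEAB) ∪ NEC'B := by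
    ext e
    induction e using Sym2.ind with
    | _ u v =>
      simp only [Set.mem_setOf_eq, Set.mem_union, Set.mem_diff, hinC, hNEABdef, hNECBdef, hw2 u v]
      have h1 := hcw u v
      have h2 := hcnw u v
      have h3 := hcc' u v
      tauto
  have hECsub : EC'B ⊆ cutC := by
    intro e he
    induction e using Sym2.ind with
    | _ u v => exact ⟨he.1, hcnw u v he.2⟩
  have hdc2a : Disjoint (cutC \ EC'B) EAB := hdc.mono_left Set.diff_subset
  have hdc2b : Disjoint (inC \ NEAB) NEC'B := by
    rw [Set.disjoint_left]
    intro e he he'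
    induction e using Sym2.ind with
    | _ u v => exact hcnw u v he'.2 he.1.2
  have h2eq : cost G D2 + EC'B.ncard + NEAB.ncard = cost G 𝒞 + EAB.ncard + NEC'B.ncard := by
    rw [cost_eq, cost_eq, hc2, hi2, ← hcutC, ← hinC,
      Set.ncard_union_eq hdc2a (hfin _) (hfin _),
      Set.ncard_union_eq hdc2b (hfin _) (hfin _)]
    have e1 := Set.ncard_diff_add_ncard_of_subset hECsub (hfin _)
    have e2 := Set.ncard_diff_add_ncard_of_subset hNEsub (hfin _)
    omega
  -- numeric part
  set a := A.card with hadef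
  set c' := C'.card with hc'def
  set b1 := (B.filter q).card with hb1def
  set b0 := (B.filter fun v => ¬ q v).card with hb0def
  rw [hEAB, hNEAB] at h3eq
  rw [hEAB, hNEAB, hEC'B, hNEC'B] at h2eq
  have hopt2 : cost G 𝒞 ≤ cost G D2 := hopt D2
  have hkey : c' * b1 + a * b0 ≤ a * b1 + c' * b0 := by
    linarith [h2eq, hopt2]
  have hb01 : b1 ≤ b0 := by
    by_contra hcon2
    push_neg at hcon2
    have hz1 : (0 : ℤ) < (c' : ℤ) - (a : ℤ) := by omega
    have hz2 : (0 : ℤ) < (b1 : ℤ) - (b0 : ℤ) := by omega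
    have hkz : ((c' : ℤ)) * b1 + (a : ℤ) * b0 ≤ (a : ℤ) * b1 + (c' : ℤ) * b0 := by
      exact_mod_cast hkey
    nlinarith [mul_pos hz1 hz2, hkz]
  have hD3le : cost G D3 ≤ cost G 𝒞 := by
    have hmul : a * b1 ≤ a * b0 := Nat.mul_le_mul_left a hb01
    linarith [h3eq, hmul]
  have hD3opt : IsOptimal G D3 := fun Q => le_trans hD3le (hopt Q)
  -- D3 satisfies AllSG
  have hsg3 : AllSG T D3 := by
    intro s' hs' D₁ hD₁ D₂ hD₂ hg₁ hg₂
    set Y := s'.leafSet with hYdef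
    have hmemY : ∀ w, w ∈ Y ↔ w ∈ s'.leaves := fun w => List.mem_toFinset
    have hABgrow : ∀ D ∈ ({A, B} : Finset (Finset V)), grows Y D → grows Y C := by
      intro D hD hg
      have hDC : D ⊆ C := by
        rcases mem_insert.1 hD with rfl | hD
        · exact hAC
        · rw [mem_singleton] at hD; subst hD; exact hBC
      exact ⟨hg.1.mono (inter_subset_inter hDC le_rfl),
        hg.2.mono (sdiff_subset_sdiff hDC le_rfl)⟩
    have hnotboth : ¬ (grows Y A ∧ grows Y B) := by
      rintro ⟨hgA, hgB⟩
      rcases Cotree.laminar T hT.nodup s' s hs' hs with hsub | hsub | hdis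
      · obtain ⟨y, hy⟩ := hgB.1
        have hyY : y ∈ Y := (mem_inter.1 hy).2
        have hyX : y ∈ X := (hmemX y).2 (hsub y ((hmemY y).1 hyY))
        exact (mem_sdiff.1 (mem_inter.1 hy).1).2 hyX
      · obtain ⟨y, hy⟩ := hgA.2
        have hyX : y ∈ X := (mem_inter.1 (mem_sdiff.1 hy).1).2
        have hyY : y ∈ Y := (hmemY y).2 (hsub y ((hmemX y).1 hyX))
        exact (mem_sdiff.1 hy).2 hyY
      · obtain ⟨y, hy⟩ := hgA.1
        have hyX : y ∈ X := (mem_inter.1 (mem_inter.1 hy).1).2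
        have hyY : y ∈ Y := (mem_inter.1 hy).2
        exact hdis y ((hmemY y).1 hyY) ((hmemX y).1 hyX)
    rw [hD3parts] at hD₁ hD₂
    rcases mem_union.1 hD₁ with h1 | h1 <;> rcases mem_union.1 hD₂ with h2 | h2
    · exact hsg s' hs' D₁ (mem_sdiff.1 h1).1 D₂ (mem_sdiff.1 h2).1 hg₁ hg₂
    · have hgC := hABgrow D₂ h2 hg₂
      have heq := hsg s' hs' D₁ (mem_sdiff.1 h1).1 C hCp hg₁ hgC
      exact absurd heq (by simpa using (mem_sdiff.1 h1).2)
    · have hgC := hABgrow D₁ h1 hg₁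
      have heq := hsg s' hs' C hCp D₂ (mem_sdiff.1 h2).1 hgC hg₂
      exact absurd heq.symm (by simpa using (mem_sdiff.1 h2).2)
    · rcases mem_insert.1 h1 with rfl | h1' <;> rcases mem_insert.1 h2 with rfl | h2'
      · rfl
      · rw [mem_singleton] at h2'
        subst h2'
        exact absurd ⟨hg₁, hg₂⟩ hnotboth
      · rw [mem_singleton] at h1'
        subst h1'
        exact absurd ⟨hg₂, hg₁⟩ hnotboth
      · rw [mem_singleton] at h1' h2'
        rw [h1', h2']
  -- D3 has one more part
  have hAnotold : A ∉ 𝒞.parts \ {C} := by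
    intro h
    obtain ⟨hAp, hAm⟩ := mem_sdiff.1 h
    exact hAm (mem_singleton.2 (𝒞.eq_of_mem_parts hAp hCp hx₀ (hAC hx₀)))
  have hBnotold : B ∉ 𝒞.parts \ {C} := by
    have hBne2 := hBne
    obtain ⟨y, hy⟩ := hBne2
    intro h
    obtain ⟨hBp, hBm⟩ := mem_sdiff.1 h
    exact hBm (mem_singleton.2 (𝒞.eq_of_mem_parts hBp hCp hy (hBC hy)))
  have hABne : A ≠ B := by
    intro h
    exact Finset.disjoint_left.1 hABdisj hx₀ (h ▸ hx₀)
  have hcard3 : D3.parts.card = 𝒞.parts.card + 1 := by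
    rw [hD3parts, card_union_of_disjoint, sdiff_singleton_eq_erase, card_erase_of_mem hCp,
      card_insert_of_notMem (by simpa using hABne), card_singleton]
    · have : 0 < 𝒞.parts.card := card_pos.2 ⟨C, hCp⟩
      omega
    · rw [Finset.disjoint_right]
      intro x hx
      rcases mem_insert.1 hx with rfl | hx
      · exact hAnotold
      · rw [mem_singleton] at hx; subst hx; exact hBnotold
  have := hmax D3 hD3opt hsg3
  omega

end ClusterEditing
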